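/- Let u be a distribution on an open U ⊂ K^n and let (x₀,ξ₀) ∈ U × (K^n ∖ {0}). Then u is Λ-smooth at (x₀,ξ₀) if and only if: for all sufficiently large r ∈ ℤ, for every x ∈ B_r(x₀) and every s > r, there is N ∈ ℤ such that F(1_{B_s(x)}u)(λξ) = 0 for all ξ ∈ B_r(ξ₀) and all λ ∈ Λ with ord λ < N. -/

import Mathlib

open MeasureTheory Filter Topology
open scoped BigOperators Classical

noncomputable section

/-- Axiomatization of a non-archimedean local field: a topological field equipped with a
surjective discrete valuation `ord : K → ℤ ∪ {∞}` whose closed balls are compact open and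
form a neighborhood basis at every point. -/
class NALocalField (K : Type) [Field K] [TopologicalSpace K] where
  ord : K → WithTop ℤ
  ord_eq_top_iff : ∀ x : K, ord x = ⊤ ↔ x = 0
  ord_mul : ∀ x y : K, ord (x * y) = ord x + ord y
  ord_add : ∀ x y : K, min (ord x) (ord y) ≤ ord (x + y)
  ord_surjective : ∀ m : ℤ, ∃ x : K, ord x = (m : WithTop ℤ)
  isOpen_ball : ∀ m : ℤ, IsOpen {x : K | (m : WithTop ℤ) ≤ ord x}
  isCompact_ball : ∀ m : ℤ, IsCompact {x : K | (m : WithTop ℤ) ≤ ord x}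
  nhds_basis : ∀ x : K, (nhds x).HasBasis (fun _ : ℤ => True)
      (fun m => {y : K | (m : WithTop ℤ) ≤ ord (y - x)})

variable {K : Type} [Field K] [TopologicalSpace K] [IsTopologicalRing K] [NALocalField K]

/-- The minimum of the valuations of the coordinates of a vector; `|v| = q^{-ordVec v}`. -/
def ordVec {ι : Type} [Fintype ι] (v : ι → K) : WithTop ℤ :=
  Finset.univ.inf fun i => NALocalField.ord (v i)

/-- The ball of valuative radius `r` around `x` in `K^ι`. -/
def pball {ι : Type} [Fintype ι] (x : ι → K) (r : ℤ) : Set (ι → K) :=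
  {y | (r : WithTop ℤ) ≤ ordVec (x - y)}

section SB
variable {α : Type} [TopologicalSpace α]

/-- Schwartz–Bruhat functions on a subset `X ⊆ α`: locally constant compactly supported
`ℂ`-valued functions on `X` (as functions on the subtype). -/
def IsSB (X : Set α) (f : X → ℂ) : Prop :=
  IsLocallyConstant f ∧ HasCompactSupport f

/-- A distribution on `X`: a functional which is `ℂ`-linear on Schwartz–Bruhat functions. -/
def IsDistribution (X : Set α) (u : (X → ℂ) → ℂ) : Prop :=
  (∀ (c : ℂ) (f : X → ℂ), IsSB X f → u (c • f) = c * u f) ∧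
  (∀ f g : X → ℂ, IsSB X f → IsSB X g → u (f + g) = u f + u g)

/-- Schwartz–Bruhat functions on an open subset `U ⊆ α`, realized as locally constant
compactly supported functions on `α` whose support is contained in `U`. -/
def IsSBOn (U : Set α) (f : α → ℂ) : Prop :=
  IsLocallyConstant f ∧ HasCompactSupport f ∧ tsupport f ⊆ U

/-- A distribution on an open set `U ⊆ α`, in the ambient-function realization. -/
def IsDistributionOn (U : Set α) (u : (α → ℂ) → ℂ) : Prop :=
  (∀ (c : ℂ) (f : α → ℂ), IsSBOn U f → u (c • f) = c * u f) ∧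
  (∀ f g : α → ℂ, IsSBOn U f → IsSBOn U g → u (f + g) = u f + u g)

end SB

/-- `ψ` is an additive character of `K` which is trivial on the maximal ideal and
nontrivial on the ring of integers. -/
def IsStandardChar (ψ : AddChar K ℂ) : Prop :=
  (∀ x : K, (1 : WithTop ℤ) ≤ NALocalField.ord x → ψ x = 1) ∧
  (∃ x : K, (0 : WithTop ℤ) ≤ NALocalField.ord x ∧ ψ x ≠ 1)

/-- `Λ` is an open subgroup of finite index of `(K^×, ×)`. -/
structure IsOpenFinIndexSubgroup (Λ : Set K) : Prop where
  one_mem : (1 : K) ∈ Λ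
  mul_mem : ∀ a ∈ Λ, ∀ b ∈ Λ, a * b ∈ Λ
  inv_mem : ∀ a ∈ Λ, a⁻¹ ∈ Λ
  ne_zero : ∀ a ∈ Λ, a ≠ 0
  isOpen : IsOpen Λ
  finiteIndex : ∃ T : Finset K, ∀ x : K, x ≠ 0 → ∃ t ∈ T, t * x ∈ Λ

section Fourier
variable (ψ : AddChar K ℂ)

/-- `F(φu)(ξ) = u(x ↦ φ(x) ψ(x·ξ))` for a functional `u`. -/
def FTrans {ι : Type} [Fintype ι] (u : ((ι → K) → ℂ) → ℂ) (φ : (ι → K) → ℂ)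
    (ξ : ι → K) : ℂ :=
  u fun x => φ x * ψ (∑ i, x i * ξ i)

/-- `Λ`-microlocal smoothness of a distribution on an open subset `U ⊆ K^ι` at a point
`(x₀, ξ₀)`: there are neighborhoods `U₀ ∋ x₀` and `V₀ ∋ ξ₀` such that for every
Schwartz–Bruhat `φ` supported in `U₀` there is `N ∈ ℤ` with `F(φu)(λξ) = 0` for all
`ξ ∈ V₀` and all `λ ∈ Λ` with `ord λ < N`. -/
def LamSmoothAt (Λ : Set K) {ι : Type} [Fintype ι] (U : Set (ι → K))
    (u : ((ι → K) → ℂ) → ℂ) (x₀ ξ₀ : ι → K) : Prop :=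
  ∃ U₀ V₀ : Set (ι → K), IsOpen U₀ ∧ IsOpen V₀ ∧ x₀ ∈ U₀ ∧ ξ₀ ∈ V₀ ∧
    ∀ φ : (ι → K) → ℂ, IsSBOn U φ → tsupport φ ⊆ U₀ →
      ∃ N : ℤ, ∀ lam ∈ Λ, NALocalField.ord lam < (N : WithTop ℤ) →
        ∀ ξ ∈ V₀, FTrans ψ u φ (fun i => lam * ξ i) = 0

/-- The `Λ`-wave front set of a distribution on an open subset `U ⊆ K^ι`: the complement
in `U × (K^ι ∖ {0})` of the set of `Λ`-smooth points. -/
def WFset (Λ : Set K) {ι : Type} [Fintype ι] (U : Set (ι → K))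
    (u : ((ι → K) → ℂ) → ℂ) : Set ((ι → K) × (ι → K)) :=
  {p | p.1 ∈ U ∧ p.2 ≠ 0 ∧ ¬ LamSmoothAt ψ Λ U u p.1 p.2}

end Fourier

/-! A Schwartz–Bruhat function `φ` is uniformly locally constant, so it is a finite combination
`∑ φ(t) 1_{B_s(t)}` of indicators of pairwise disjoint balls of one radius `s`, which may be taken
as large as we like, centred in its support. By linearity of `u`, `F(φu)` is the corresponding
combination of the `F(1_{B_s(t)}u)`, and the finitely many thresholds `N` combine into one.
Conversely, ball indicators are themselves Schwartz–Bruhat functions. -/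

namespace NALocalField

variable {K : Type} [Field K] [TopologicalSpace K] [NALocalField K]

theorem ord_zero : ord (0 : K) = ⊤ := (ord_eq_top_iff 0).2 rfl

theorem ord_one : ord (1 : K) = 0 := by
  have h := ord_mul (1 : K) 1
  rw [one_mul] at h
  lift ord (1 : K) to ℤ using (ord_eq_top_iff 1).not.2 one_ne_zero with m
  have : m = m + m := by exact_mod_cast h
  exact_mod_cast (by omega : m = 0)

theorem ord_neg_one : ord (-1 : K) = 0 := by
  have h := ord_mul (-1 : K) (-1)
  rw [neg_one_mul, neg_neg, ord_one] at h
  lift ord (-1 : K) to ℤ using (ord_eq_top_iff _).not.2 (neg_ne_zero.2 one_ne_zero) with m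
  have : 0 = m + m := by exact_mod_cast h
  exact_mod_cast (by omega : m = 0)

theorem ord_neg (x : K) : ord (-x) = ord x := by
  rw [← neg_one_mul, ord_mul, ord_neg_one, zero_add]

theorem ord_sub_comm (x y : K) : ord (x - y) = ord (y - x) := by
  rw [← ord_neg, neg_sub]

end NALocalField

open NALocalField

section Balls

variable {K : Type} [Field K] [TopologicalSpace K] [NALocalField K] {ι : Type} [Fintype ι]

theorem mem_pball {x y : ι → K} {r : ℤ} :
    y ∈ pball x r ↔ ∀ i, (r : WithTop ℤ) ≤ ord (x i - y i) := by
  simp [pball, ordVec]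

theorem mem_pball_self (x : ι → K) (r : ℤ) : x ∈ pball x r :=
  mem_pball.2 fun i => by simp [ord_zero]

theorem mem_pball_comm {x y : ι → K} {r : ℤ} : y ∈ pball x r ↔ x ∈ pball y r := by
  simp only [mem_pball, ord_sub_comm (x _)]

theorem pball_subset_pball {x : ι → K} {r s : ℤ} (h : r ≤ s) : pball x s ⊆ pball x r :=
  fun _ hy => mem_pball.2 fun i => (WithTop.coe_le_coe.2 h).trans (mem_pball.1 hy i)

theorem pball_subset_of_mem {x y : ι → K} {r : ℤ} (h : y ∈ pball x r) :
    pball y r ⊆ pball x r := fun z hz => mem_pball.2 fun i =>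
  sub_add_sub_cancel (x i) (y i) (z i) ▸
    (le_min (mem_pball.1 h i) (mem_pball.1 hz i)).trans (ord_add _ _)

theorem pball_subset_pball_of_mem {x₀ x : ι → K} {r s : ℤ} (hx : x ∈ pball x₀ r) (h : r ≤ s) :
    pball x s ⊆ pball x₀ r :=
  (pball_subset_pball h).trans (pball_subset_of_mem hx)

theorem pball_eq_of_mem {x y : ι → K} {r : ℤ} (h : y ∈ pball x r) : pball y r = pball x r :=
  (pball_subset_of_mem h).antisymm (pball_subset_of_mem (mem_pball_comm.1 h))

theorem pball_eq_or_disjoint (x y : ι → K) (r : ℤ) :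
    pball x r = pball y r ∨ Disjoint (pball x r) (pball y r) := by
  rw [or_iff_not_imp_right, Set.not_disjoint_iff]
  rintro ⟨z, hzx, hzy⟩
  rw [← pball_eq_of_mem hzx, pball_eq_of_mem hzy]

theorem pball_eq_pi (x : ι → K) (r : ℤ) :
    pball x r = Set.univ.pi fun i => {t : K | (r : WithTop ℤ) ≤ ord (t - x i)} := by
  ext y
  simp [mem_pball, ord_sub_comm (x _)]

theorem pball_mem_nhds (x : ι → K) (r : ℤ) : pball x r ∈ 𝓝 x := by
  rw [pball_eq_pi]
  exact set_pi_mem_nhds Set.finite_univ fun i _ => (nhds_basis (x i)).mem_of_mem trivial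

theorem exists_pball_subset_of_mem_nhds {x : ι → K} {W : Set (ι → K)} (h : W ∈ 𝓝 x) :
    ∃ r : ℤ, pball x r ⊆ W := by
  rw [nhds_pi, Filter.mem_pi] at h
  obtain ⟨I, -, V, hV, hVW⟩ := h
  choose m hm using fun i => (nhds_basis (x i)).mem_iff.1 (hV i)
  obtain ⟨r, hr⟩ := Finset.exists_le (Finset.univ.image m)
  refine ⟨r, fun y hy => hVW fun i _ => (hm i).2 ?_⟩
  have hy' := pball_subset_pball (hr _ (Finset.mem_image_of_mem m (Finset.mem_univ i))) hy
  rw [pball_eq_pi] at hy'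
  exact hy' i trivial

theorem isOpen_pball (x : ι → K) (r : ℤ) : IsOpen (pball x r) :=
  isOpen_iff_mem_nhds.2 fun _ hy => pball_eq_of_mem hy ▸ pball_mem_nhds _ r

theorem isClosed_pball (x : ι → K) (r : ℤ) : IsClosed (pball x r) := by
  refine isOpen_compl_iff.1 (isOpen_iff_mem_nhds.2 fun y hy => ?_)
  refine Filter.mem_of_superset (pball_mem_nhds y r) ?_
  rcases pball_eq_or_disjoint y x r with h | h
  · exact absurd (h ▸ mem_pball_self y r) hy
  · exact h.subset_compl_right

theorem isCompact_pball [IsTopologicalAddGroup K] (x : ι → K) (r : ℤ) :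
    IsCompact (pball x r) := by
  rw [pball_eq_pi]
  exact isCompact_univ_pi fun i =>
    (Homeomorph.subRight (x i)).isCompact_preimage.2 (isCompact_ball r)

end Balls

section SchwartzBruhat

variable {α β : Type} [TopologicalSpace α] {U : Set α}

theorem IsSBOn.zero (U : Set α) : IsSBOn U (0 : α → ℂ) :=
  ⟨IsLocallyConstant.const 0, HasCompactSupport.zero, by simp⟩

theorem IsSBOn.add {f g : α → ℂ} (hf : IsSBOn U f) (hg : IsSBOn U g) : IsSBOn U (f + g) :=
  ⟨hf.1.add hg.1, hf.2.1.add hg.2.1, (tsupport_add f g).trans (Set.union_subset hf.2.2 hg.2.2)⟩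

theorem IsSBOn.const_smul {f : α → ℂ} (c : ℂ) (hf : IsSBOn U f) : IsSBOn U (c • f) :=
  ⟨hf.1.comp (c • ·), hf.2.1.smul_left (f := fun _ => c),
    (tsupport_smul_subset_right (fun _ => c) f).trans hf.2.2⟩

theorem IsSBOn.mul_right {f g : α → ℂ} (hf : IsSBOn U f) (hg : IsLocallyConstant g) :
    IsSBOn U (f * g) :=
  ⟨hf.1.mul hg, hf.2.1.mul_right, tsupport_mul_subset_left.trans hf.2.2⟩

theorem IsSBOn.sum {G : Finset β} {f : β → α → ℂ} (hf : ∀ t ∈ G, IsSBOn U (f t)) :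
    IsSBOn U (∑ t ∈ G, f t) :=
  Finset.sum_induction _ (IsSBOn U) (fun _ _ => IsSBOn.add) (IsSBOn.zero U) hf

theorem IsDistributionOn.map_zero {u : (α → ℂ) → ℂ} (hu : IsDistributionOn U u) : u 0 = 0 := by
  simpa using hu.1 0 0 (IsSBOn.zero U)

theorem IsDistributionOn.map_sum_smul {u : (α → ℂ) → ℂ} (hu : IsDistributionOn U u)
    {G : Finset β} (c : β → ℂ) {f : β → α → ℂ} (hf : ∀ t ∈ G, IsSBOn U (f t)) :
    u (∑ t ∈ G, c t • f t) = ∑ t ∈ G, c t * u (f t) := by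
  classical
  induction G using Finset.induction_on with
  | empty => simpa using hu.map_zero
  | insert a G ha ih =>
    rw [Finset.forall_mem_insert] at hf
    rw [Finset.sum_insert ha, Finset.sum_insert ha,
      hu.2 _ _ (hf.1.const_smul _) (IsSBOn.sum fun t ht => (hf.2 t ht).const_smul _),
      hu.1 _ _ hf.1, ih hf.2]

end SchwartzBruhat

section Fourier

variable {K : Type} [Field K] [TopologicalSpace K] [NALocalField K] {ι : Type} [Fintype ι]

theorem IsStandardChar.isLocallyConstant [IsTopologicalAddGroup K] {ψ : AddChar K ℂ}
    (hψ : IsStandardChar ψ) : IsLocallyConstant ψ := by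
  refine (IsLocallyConstant.iff_exists_open _).2 fun t =>
    ⟨{y | (1 : WithTop ℤ) ≤ ord (y - t)}, (isOpen_ball 1).preimage (continuous_sub_right t),
      by simp [ord_zero], fun y hy => ?_⟩
  rw [← add_sub_cancel t y, AddChar.map_add_eq_mul, hψ.1 _ hy, mul_one]

theorem IsStandardChar.isLocallyConstant_pairing [IsTopologicalRing K] {ψ : AddChar K ℂ}
    (hψ : IsStandardChar ψ) (ξ : ι → K) :
    IsLocallyConstant fun x : ι → K => ψ (∑ i, x i * ξ i) :=
  hψ.isLocallyConstant.comp_continuous (by fun_prop)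

theorem FTrans_sum_smul [IsTopologicalRing K] {β : Type} {ψ : AddChar K ℂ}
    (hψ : IsStandardChar ψ) {U : Set (ι → K)} {u : ((ι → K) → ℂ) → ℂ}
    (hu : IsDistributionOn U u) {G : Finset β} (c : β → ℂ) {f : β → (ι → K) → ℂ}
    (hf : ∀ t ∈ G, IsSBOn U (f t)) (ξ : ι → K) :
    FTrans ψ u (∑ t ∈ G, c t • f t) ξ = ∑ t ∈ G, c t * FTrans ψ u (f t) ξ := by
  have h : (fun x => (∑ t ∈ G, c t • f t) x * ψ (∑ i, x i * ξ i)) =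
      ∑ t ∈ G, c t • (f t * fun x => ψ (∑ i, x i * ξ i)) := by
    ext x
    simp [Finset.sum_apply, Finset.sum_mul, mul_assoc]
  rw [FTrans, h, hu.map_sum_smul c fun t ht => (hf t ht).mul_right (hψ.isLocallyConstant_pairing ξ)]
  rfl

theorem tsupport_indicator_pball_subset (x : ι → K) (s : ℤ) :
    tsupport (fun y => if y ∈ pball x s then (1 : ℂ) else 0) ⊆ pball x s :=
  (isClosed_pball x s).closure_subset_iff.2 fun _ hy => of_not_not fun h => hy (if_neg h)

theorem isSBOn_indicator_pball [IsTopologicalAddGroup K] {U : Set (ι → K)} {x : ι → K} {s : ℤ}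
    (h : pball x s ⊆ U) : IsSBOn U (fun y => if y ∈ pball x s then (1 : ℂ) else 0) :=
  ⟨((LocallyConstant.const _ (1 : ℂ)).indicator
      ⟨isClosed_pball x s, isOpen_pball x s⟩).isLocallyConstant,
    (isCompact_pball x s).of_isClosed_subset (isClosed_tsupport _)
      (tsupport_indicator_pball_subset x s),
    (tsupport_indicator_pball_subset x s).trans h⟩

end Fourier

section Decomposition

variable {K : Type} [Field K] [TopologicalSpace K] [NALocalField K] {ι : Type} [Fintype ι]

theorem IsLocallyConstant.exists_forall_mem_pball_eq {φ : (ι → K) → ℂ}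
    (hφ : IsLocallyConstant φ) (hc : HasCompactSupport φ) (r : ℤ) :
    ∃ s, r < s ∧ ∀ x, ∀ y ∈ pball x s, φ y = φ x := by
  choose sz hsz using fun z => exists_pball_subset_of_mem_nhds (hφ.eventually_eq z)
  obtain ⟨T, -, hT⟩ := hc.elim_nhds_subcover (fun z => pball z (sz z))
    fun z _ => pball_mem_nhds z _
  obtain ⟨s, hs⟩ := Finset.exists_le (insert (r + 1) (T.image sz))
  refine ⟨s, hs _ (Finset.mem_insert_self _ _), ?_⟩
  have hsupp : ∀ x ∈ tsupport φ, ∀ y ∈ pball x s, φ y = φ x := by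
    intro x hx y hy
    obtain ⟨z, hzT, hxz⟩ := Set.mem_iUnion₂.1 (hT hx)
    have hsub : pball x s ⊆ pball z (sz z) := pball_subset_pball_of_mem hxz
      (hs _ (Finset.mem_insert_of_mem (Finset.mem_image_of_mem sz hzT)))
    exact (hsz z (hsub hy)).trans (hsz z (hsub (mem_pball_self x s))).symm
  intro x y hy
  by_cases hx : x ∈ tsupport φ
  · exact hsupp x hx y hy
  by_cases hy' : y ∈ tsupport φ
  · exact (hsupp y hy' x (mem_pball_comm.1 hy)).symm
  rw [image_eq_zero_of_notMem_tsupport hx, image_eq_zero_of_notMem_tsupport hy']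

theorem IsCompact.exists_finset_pairwiseDisjoint_pball_cover {S : Set (ι → K)}
    (hS : IsCompact S) (s : ℤ) :
    ∃ G : Finset (ι → K), ↑G ⊆ S ∧ S ⊆ ⋃ t ∈ G, pball t s ∧
      (G : Set (ι → K)).PairwiseDisjoint (pball · s) := by
  classical
  obtain ⟨T, hTS, hST⟩ := hS.elim_nhds_subcover (pball · s) fun z _ => pball_mem_nhds z s
  obtain ⟨G, hGT, hinj, himage⟩ := Finset.exists_subset_injOn_image_eq_of_surjOn
    (T : Set (ι → K)) (T.image (pball · s))
    (by simpa using Set.surjOn_image (pball · s) (T : Set (ι → K)))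
  refine ⟨G, fun t ht => hTS t (hGT ht), fun z hz => ?_,
    fun a ha b hb hab => (pball_eq_or_disjoint a b s).resolve_left fun h => hab (hinj ha hb h)⟩
  obtain ⟨t, htT, hzt⟩ := Set.mem_iUnion₂.1 (hST hz)
  obtain ⟨g, hgG, hgt⟩ := Finset.mem_image.1 (himage ▸ Finset.mem_image_of_mem (pball · s) htT)
  exact Set.mem_iUnion₂.2 ⟨g, hgG, hgt ▸ hzt⟩

theorem IsLocallyConstant.exists_eq_sum_smul_indicator_pball {φ : (ι → K) → ℂ}
    (hφ : IsLocallyConstant φ) (hc : HasCompactSupport φ) (r : ℤ) :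
    ∃ s, r < s ∧ ∃ G : Finset (ι → K), ↑G ⊆ tsupport φ ∧
      φ = ∑ t ∈ G, φ t • fun y => if y ∈ pball t s then (1 : ℂ) else 0 := by
  obtain ⟨s, hrs, hconst⟩ := hφ.exists_forall_mem_pball_eq hc r
  obtain ⟨G, hG, hcover, hdisj⟩ := hc.exists_finset_pairwiseDisjoint_pball_cover s
  refine ⟨s, hrs, G, hG, funext fun y => ?_⟩
  have hφy : φ y = (⋃ t ∈ G, pball t s).indicator φ y := by
    rw [Set.indicator_eq_self.2 ((subset_tsupport φ).trans hcover)]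
  rw [hφy, Finset.indicator_biUnion_apply G _ hdisj, Finset.sum_apply]
  refine Finset.sum_congr rfl fun t _ => ?_
  by_cases hy : y ∈ pball t s <;> simp [hy, hconst t y]

end Decomposition

theorem exists_threshold_forall_finset {X β : Type} (v : X → WithTop ℤ) (S : Set X)
    (G : Finset β) {P : β → X → Prop} (h : ∀ t ∈ G, ∃ N : ℤ, ∀ x ∈ S, v x < N → P t x) :
    ∃ N : ℤ, ∀ x ∈ S, v x < N → ∀ t ∈ G, P t x := by
  choose! N hN using h
  obtain ⟨M, hM⟩ := Finset.exists_le (G.image fun t => -N t)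
  refine ⟨-M, fun x hx hv t ht => hN t ht x hx (hv.trans_le ?_)⟩
  have := hM _ (Finset.mem_image_of_mem _ ht)
  exact_mod_cast (by omega : -M ≤ N t)

theorem lamSmoothAt_iff_ball_criterion_general {K : Type} [Field K] [TopologicalSpace K]
    [IsTopologicalRing K] [NALocalField K]
    (ψ : AddChar K ℂ) (hψ : IsStandardChar ψ)
    (Λ : Set K)
    {n : ℕ} (U : Set (Fin n → K)) (hU : IsOpen U)
    (u : ((Fin n → K) → ℂ) → ℂ) (hu : IsDistributionOn U u)
    (x₀ ξ₀ : Fin n → K) (hx₀ : x₀ ∈ U) :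
    LamSmoothAt ψ Λ U u x₀ ξ₀ ↔
      ∃ r₀ : ℤ, ∀ r : ℤ, r₀ ≤ r → ∀ x ∈ pball x₀ r, ∀ s : ℤ, r < s →
        ∃ N : ℤ, ∀ lam ∈ Λ, NALocalField.ord lam < (N : WithTop ℤ) →
          ∀ ξ ∈ pball ξ₀ r,
            FTrans ψ u (fun y => if y ∈ pball x s then (1 : ℂ) else 0)
              (fun i => lam * ξ i) = 0 := by
  constructor
  · rintro ⟨U₀, V₀, hU₀, hV₀, hxU₀, hξV₀, H⟩
    obtain ⟨r₁, hr₁⟩ := exists_pball_subset_of_mem_nhds ((hU₀.inter hU).mem_nhds ⟨hxU₀, hx₀⟩)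
    obtain ⟨r₂, hr₂⟩ := exists_pball_subset_of_mem_nhds (hV₀.mem_nhds hξV₀)
    refine ⟨max r₁ r₂, fun r hr x hx s hs => ?_⟩
    have hball : pball x s ⊆ U₀ ∩ U := ((pball_subset_pball_of_mem hx hs.le).trans
      (pball_subset_pball (le_of_max_le_left hr))).trans hr₁
    obtain ⟨N, hN⟩ := H _ (isSBOn_indicator_pball (hball.trans Set.inter_subset_right))
      ((tsupport_indicator_pball_subset x s).trans (hball.trans Set.inter_subset_left))
    exact ⟨N, fun lam hlam hord ξ hξ =>
      hN lam hlam hord ξ (hr₂ (pball_subset_pball (le_of_max_le_right hr) hξ))⟩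
  · rintro ⟨r₀, H⟩
    obtain ⟨r₁, hr₁⟩ := exists_pball_subset_of_mem_nhds (hU.mem_nhds hx₀)
    obtain ⟨r, hr₀, hrU⟩ : ∃ r, r₀ ≤ r ∧ pball x₀ r ⊆ U :=
      ⟨max r₀ r₁, le_max_left _ _, (pball_subset_pball (le_max_right _ _)).trans hr₁⟩
    refine ⟨pball x₀ r, pball ξ₀ r, isOpen_pball _ _, isOpen_pball _ _,
      mem_pball_self _ _, mem_pball_self _ _, fun φ hφ hφx₀ => ?_⟩
    obtain ⟨s, hrs, G, hGφ, hφG⟩ := hφ.1.exists_eq_sum_smul_indicator_pball hφ.2.1 r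
    have hG : ∀ t ∈ G, t ∈ pball x₀ r := fun t ht => hφx₀ (hGφ ht)
    have hGU : ∀ t ∈ G, pball t s ⊆ U := fun t ht =>
      (pball_subset_pball_of_mem (hG t ht) hrs.le).trans hrU
    obtain ⟨N, hN⟩ := exists_threshold_forall_finset ord Λ G
      fun t ht => H r hr₀ t (hG t ht) s hrs
    refine ⟨N, fun lam hlam hord ξ hξ => ?_⟩
    rw [hφG, FTrans_sum_smul hψ hu _ fun t ht => isSBOn_indicator_pball (hGU t ht)]
    exact Finset.sum_eq_zero fun t ht => by rw [hN lam hlam hord t ht ξ hξ, mul_zero]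

/-- Let `u` be a distribution on an open `U ⊆ K^n` and
`(x₀, ξ₀) ∈ U × (K^n ∖ {0})`. Then `u` is `Λ`-smooth at `(x₀, ξ₀)` if and only if: for all
sufficiently large `r ∈ ℤ`, for every `x ∈ B_r(x₀)` and every `s > r`, there is `N ∈ ℤ`
such that `F(1_{B_s(x)} u)(λξ) = 0` for all `ξ ∈ B_r(ξ₀)` and all `λ ∈ Λ` with
`ord λ < N`. -/
theorem lamSmoothAt_iff_ball_criterion {K : Type} [Field K] [TopologicalSpace K]
    [IsTopologicalRing K] [NALocalField K]
    (ψ : AddChar K ℂ) (hψ : IsStandardChar ψ)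
    (Λ : Set K) (hΛ : IsOpenFinIndexSubgroup Λ)
    {n : ℕ} (U : Set (Fin n → K)) (hU : IsOpen U)
    (u : ((Fin n → K) → ℂ) → ℂ) (hu : IsDistributionOn U u)
    (x₀ ξ₀ : Fin n → K) (hx₀ : x₀ ∈ U) (hξ₀ : ξ₀ ≠ 0) :
    LamSmoothAt ψ Λ U u x₀ ξ₀ ↔
      ∃ r₀ : ℤ, ∀ r : ℤ, r₀ ≤ r → ∀ x ∈ pball x₀ r, ∀ s : ℤ, r < s →
        ∃ N : ℤ, ∀ lam ∈ Λ, NALocalField.ord lam < (N : WithTop ℤ) →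
          ∀ ξ ∈ pball ξ₀ r,
            FTrans ψ u (fun y => if y ∈ pball x s then (1 : ℂ) else 0)
              (fun i => lam * ξ i) = 0 :=
  lamSmoothAt_iff_ball_criterion_general ψ hψ Λ U hU u hu x₀ ξ₀ hx₀
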